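/- Let m be a positive even integer and n a positive odd integer. The number of group homomorphisms from D_m into D_n is 1 + 2n + n·(∑_{k | gcd(m,n)} φ(k)). -/

import Mathlib

/-!
A homomorphism `D_m → G` is the same as a pair `(b, a)` with `b² = 1`, `aᵐ = 1` and
`b a b = a⁻¹`; we count such pairs in `D_n`. As `n` is odd, the involutions of `D_n` are `1`
and the `n` reflections. For `b = 1` the condition is `a² = 1` (which implies `aᵐ = 1` as `m` is
even), giving `n + 1` choices. For a reflection `b`, every rotation is inverted by `b`, and the
rotations with `aᵐ = 1` form the `m`-torsion of `ℤ/n`, of size `gcd(m, n) = ∑_{k ∣ gcd(m, n)} φ(k)`;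
the only reflection inverted by `b` is `b` itself.
-/

lemma pow_eq_one_of_even {G : Type*} [Monoid G] {m : ℕ} {a : G} (hm : Even m) (ha : a * a = 1) :
    a ^ m = 1 := by
  obtain ⟨k, rfl⟩ := hm
  rw [← two_mul, pow_mul, sq, ha, one_pow]

lemma ZMod.card_mul_natCast_eq_zero (m n : ℕ) [NeZero n] :
    Nat.card {j : ZMod n // j * m = 0} = Nat.gcd n m := by
  have hker := IsAddCyclic.card_nsmulAddMonoidHom_ker (ZMod n) m
  rw [Nat.card_zmod] at hker
  rw [← hker]
  exact Nat.card_congr (Equiv.subtypeEquivRight fun j => by simp [mul_comm] :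
    {j : ZMod n // j * m = 0} ≃ {j // j ∈ (nsmulAddMonoidHom m : ZMod n →+ ZMod n).ker})

namespace DihedralGroup

section Lift

variable {G : Type*} [Group G] {m : ℕ} [NeZero m] {a b : G}

lemma pow_val_add (ha : a ^ m = 1) (i j : ZMod m) :
    a ^ (i + j).val = a ^ i.val * a ^ j.val := by
  rw [ZMod.val_add, ← pow_eq_pow_mod _ ha, pow_add]

lemma pow_val_sub (ha : a ^ m = 1) (i j : ZMod m) :
    a ^ (j - i).val = (a ^ i.val)⁻¹ * a ^ j.val := by
  rw [eq_inv_mul_iff_mul_eq, ← pow_val_add ha, add_sub_cancel]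

omit [NeZero m] in
lemma mul_pow_mul_eq_inv_pow (hb : b * b = 1) (hab : b * a * b = a⁻¹) (k : ℕ) :
    b * a ^ k * b = (a ^ k)⁻¹ := by
  have hb' : b⁻¹ = b := inv_eq_of_mul_eq_one_right hb
  calc b * a ^ k * b = (b * a * b⁻¹) ^ k := by rw [conj_pow, hb']
    _ = (a ^ k)⁻¹ := by rw [hb', hab, inv_pow]

def lift (a b : G) (ha : a ^ m = 1) (hb : b * b = 1) (hab : b * a * b = a⁻¹) :
    DihedralGroup m →* G where
  toFun
    | r i => a ^ i.val
    | sr i => b * a ^ i.val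
  map_one' := show a ^ (0 : ZMod m).val = 1 by simp
  map_mul' := by
    have hconj := mul_pow_mul_eq_inv_pow hb hab
    rintro (i | i) (j | j)
    · exact pow_val_add ha i j
    · show b * a ^ (j - i).val = a ^ i.val * (b * a ^ j.val)
      rw [pow_val_sub ha, ← hconj]
      simp only [← mul_assoc, hb, one_mul]
    · show b * a ^ (i + j).val = b * a ^ i.val * a ^ j.val
      rw [pow_val_add ha, mul_assoc]
    · show a ^ (j - i).val = b * a ^ i.val * (b * a ^ j.val)
      rw [pow_val_sub ha, ← hconj, mul_assoc]

@[simp]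
lemma lift_r (ha : a ^ m = 1) (hb : b * b = 1) (hab : b * a * b = a⁻¹) (i : ZMod m) :
    lift a b ha hb hab (r i) = a ^ i.val := rfl

@[simp]
lemma lift_sr (ha : a ^ m = 1) (hb : b * b = 1) (hab : b * a * b = a⁻¹) (i : ZMod m) :
    lift a b ha hb hab (sr i) = b * a ^ i.val := rfl

variable (G m) in
def homEquiv : (DihedralGroup m →* G) ≃
    {p : G × G // p.1 * p.1 = 1 ∧ p.2 ^ m = 1 ∧ p.1 * p.2 * p.1 = p.2⁻¹} where
  toFun f := ⟨(f (sr 0), f (r 1)), by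
    refine ⟨?_, ?_, ?_⟩
    · rw [← map_mul, sr_mul_self, map_one]
    · rw [← map_pow, r_one_pow, ZMod.natCast_self, ← one_def, map_one]
    · rw [← map_mul, ← map_mul, ← map_inv, sr_mul_r, sr_mul_sr, inv_r]
      simp⟩
  invFun p := lift p.1.2 p.1.1 p.2.2.1 p.2.1 p.2.2.2
  left_inv f := by
    ext (i | i)
    · show f (r 1) ^ i.val = f (r i)
      rw [← map_pow, r_one_pow, ZMod.natCast_zmod_val]
    · show f (sr 0) * f (r 1) ^ i.val = f (sr i)
      rw [← map_pow, r_one_pow, ZMod.natCast_zmod_val, ← map_mul, sr_mul_r, zero_add]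
  right_inv p := by
    obtain ⟨⟨b, a⟩, -, ha, -⟩ := p
    ext
    · simp
    · simp [ZMod.val_one_eq_one_mod, ← pow_eq_pow_mod _ ha]

end Lift

variable {n : ℕ}

lemma card_subtype [NeZero n] (Q : DihedralGroup n → Prop) :
    Nat.card {x // Q x} = Nat.card {i // Q (r i)} + Nat.card {i // Q (sr i)} := by
  rw [← Nat.card_sum]
  exact Nat.card_congr ((equivSum.subtypeEquiv (q := fun s => Q (equivSum.symm s))
    fun x => by cases x <;> rfl).trans Equiv.subtypeSum)

lemma sum_univ [NeZero n] {M : Type*} [AddCommMonoid M] (f : DihedralGroup n → M) :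
    ∑ x, f x = ∑ i, f (r i) + ∑ i, f (sr i) := by
  rw [← equivSum.symm.sum_comp, Fintype.sum_sum_type]
  rfl

lemma r_mul_self_eq_one_iff (hn : Odd n) {i : ZMod n} : r i * r i = 1 ↔ i = 0 := by
  rw [r_mul_r, one_def, r.injEq, ZMod.add_self_eq_zero_iff_eq_zero hn]

lemma card_mul_self_eq_one (hn : Odd n) :
    Nat.card {a : DihedralGroup n // a * a = 1} = n + 1 := by
  have := NeZero.of_pos hn.pos
  simp only [card_subtype, r_mul_self_eq_one_iff hn, sr_mul_self]
  simp [add_comm]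

lemma sr_mul_sr_mul_sr_eq_self_iff (hn : Odd n) {t u : ZMod n} :
    sr t * sr u * sr t = sr u ↔ u = t := by
  have h : t - (u - t) - u = (t - u) + (t - u) := by ring
  rw [sr_mul_sr, r_mul_sr, sr.injEq, ← sub_eq_zero, h, ZMod.add_self_eq_zero_iff_eq_zero hn,
    sub_eq_zero, eq_comm]

variable {m : ℕ}

lemma card_pow_eq_one_and_sr_conj_eq_inv (hm : Even m) (hn : Odd n) (t : ZMod n) :
    Nat.card {a : DihedralGroup n // a ^ m = 1 ∧ sr t * a * sr t = a⁻¹} = Nat.gcd m n + 1 := by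
  have := NeZero.of_pos hn.pos
  rw [card_subtype, Nat.gcd_comm, ← ZMod.card_mul_natCast_eq_zero]
  congr 1
  · refine Nat.card_congr (Equiv.subtypeEquivRight fun i => ?_)
    rw [r_pow, sr_mul_r, sr_mul_sr, inv_r, one_def, r.injEq, r.injEq, sub_add_cancel_left]
    exact and_iff_left rfl
  · simp only [pow_eq_one_of_even hm (sr_mul_self _), inv_sr, sr_mul_sr_mul_sr_eq_self_iff hn,
      true_and]
    exact Nat.card_unique

lemma card_relation_pairs_of_even_of_odd (hm : Even m) (hn : Odd n) :
    Nat.card {p : DihedralGroup n × DihedralGroup n //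
      p.1 * p.1 = 1 ∧ p.2 ^ m = 1 ∧ p.1 * p.2 * p.1 = p.2⁻¹} = n + 1 + n * (Nat.gcd m n + 1) := by
  have := NeZero.of_pos hn.pos
  rw [Nat.card_congr (Equiv.subtypeProdEquivSigmaSubtype
      fun b a : DihedralGroup n => b * b = 1 ∧ a ^ m = 1 ∧ b * a * b = a⁻¹),
    Nat.card_sigma, sum_univ, Finset.sum_eq_single 0]
  · have hid : ∀ a : DihedralGroup n, a ^ m = 1 ∧ a = a⁻¹ ↔ a * a = 1 := fun a =>
      ⟨fun h => mul_eq_one_iff_eq_inv.mpr h.2,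
        fun h => ⟨pow_eq_one_of_even hm h, mul_eq_one_iff_eq_inv.mp h⟩⟩
    simp only [← one_def, one_mul, mul_one, true_and, sr_mul_self,
      card_pow_eq_one_and_sr_conj_eq_inv hm hn, Finset.sum_const, Finset.card_univ, ZMod.card,
      smul_eq_mul]
    rw [Nat.card_congr (Equiv.subtypeEquivRight hid), card_mul_self_eq_one hn]
  · intro i _ hi
    simp only [r_mul_self_eq_one_iff hn, hi, false_and]
    exact Nat.card_of_isEmpty
  · simp

end DihedralGroup

open DihedralGroup in
theorem numHom_even_odd_general (m n : ℕ) (hm : 0 < m) (hme : Even m) (hno : Odd n) :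
    Nat.card (DihedralGroup m →* DihedralGroup n) =
      1 + 2 * n + n * ∑ k ∈ (Nat.gcd m n).divisors, Nat.totient k := by
  have : NeZero m := ⟨hm.ne'⟩
  rw [Nat.card_congr (homEquiv _ m), card_relation_pairs_of_even_of_odd hme hno, Nat.sum_totient]
  ring

theorem numHom_even_odd (m n : ℕ) (hm : 0 < m) (hn : 0 < n) (hme : Even m) (hno : Odd n) :
    Nat.card (DihedralGroup m →* DihedralGroup n) =
      1 + 2 * n + n * ∑ k ∈ (Nat.gcd m n).divisors, Nat.totient k :=
  numHom_even_odd_general m n hm hme hno
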